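/- For any matrix Z ∈ ℝ^{m×n} with singular value decomposition Z = UΣVᵀ (singular values in non-increasing order), the truncated SVD U Σ_r Vᵀ — where Σ_r keeps only the r largest singular values and zeroes the rest — is a minimizer of ‖Z − Y‖_F² over all Y with rank(Y) ≤ r (Eckart–Young theorem in Frobenius norm). -/

import Mathlib

/-!
A matrix `Y` of rank at most `r` vanishes on an `(n - r)`-dimensional subspace, spanned by the
orthonormal columns of some `W`. Compressing by `W` cannot increase the Frobenius norm, so
`‖Z - Y‖² ≥ ‖Z W‖² = ∑ⱼ σⱼ² cⱼ`, where the `cⱼ` are the squared row norms of `Vᵀ W`: weights in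
`[0, 1]` of total mass `n - r`. Such a weighted sum is at least the sum of the `n - r` smallest
`σⱼ²`, which is the squared error of the truncated SVD.
-/

open scoped BigOperators

/-- Frobenius norm of a real matrix. -/
noncomputable def frobNorm {m n : ℕ} (A : Matrix (Fin m) (Fin n) ℝ) : ℝ :=
  Real.sqrt (∑ i, ∑ j, A i j ^ 2)

open Matrix Finset

lemma Finset.sum_le_sum_mul_of_sum_eq_card {ι : Type*} [Fintype ι]
    (s : Finset ι) (f c : ι → ℝ) (t : ℝ) (hs : ∀ j ∈ s, f j ≤ t) (hsc : ∀ j ∉ s, t ≤ f j)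
    (hc0 : ∀ j, 0 ≤ c j) (hc1 : ∀ j, c j ≤ 1) (hc : ∑ j, c j = #s) :
    ∑ j ∈ s, f j ≤ ∑ j, f j * c j := by
  classical
  -- termwise `(f j - t) * (𝟙ₛ j - c j) ≤ 0`; the `t`-terms cancel since both weights have mass `#s`
  have htermwise : ∀ j ∈ univ, f j * (if j ∈ s then 1 else 0) - f j * c j
      ≤ t * ((if j ∈ s then 1 else 0) - c j) := by
    intro j _
    split_ifs with h
    · nlinarith [hs j h, hc1 j]
    · nlinarith [hsc j h, hc0 j]
  have := Finset.sum_le_sum htermwise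
  simp only [sum_sub_distrib, ← mul_sum, mul_ite, mul_one, mul_zero, sum_ite_mem, univ_inter,
    hc] at this
  simpa using this

namespace Fin

lemma sum_ite_val_eq {m : ℕ} (t : ℕ) (a : ℝ) :
    ∑ i : Fin m, (if (i : ℕ) = t then a else 0) = if t < m then a else 0 := by
  rw [Fin.sum_univ_eq_sum_range (fun i => if i = t then a else 0), sum_ite_eq']
  simp

lemma card_filter_le_val {n r : ℕ} : #{j : Fin n | r ≤ (j : ℕ)} = n - r := by
  simp_rw [← not_lt]
  rw [filter_not, card_sdiff_of_subset (filter_subset _ _), card_filter_val_lt, card_univ,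
    Fintype.card_fin]
  omega

end Fin

section FrobeniusSq

variable {ι κ μ : Type*} [Fintype ι] [Fintype κ] [Fintype μ]

noncomputable def frobSq (A : Matrix ι κ ℝ) : ℝ := ∑ i, ∑ j, A i j ^ 2

lemma frobSq_nonneg (A : Matrix ι κ ℝ) : 0 ≤ frobSq A := by
  unfold frobSq; positivity

lemma frobSq_eq_trace (A : Matrix ι κ ℝ) : frobSq A = (Aᵀ * A).trace := by
  rw [frobSq, Finset.sum_comm]
  simp [Matrix.trace, Matrix.mul_apply, sq]

lemma frobSq_mul_eq_trace (A : Matrix ι κ ℝ) (Q : Matrix κ μ ℝ) :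
    frobSq (A * Q) = (Aᵀ * A * (Q * Qᵀ)).trace := by
  rw [frobSq_eq_trace, transpose_mul, Matrix.mul_assoc, trace_mul_comm, Matrix.mul_assoc,
    Matrix.mul_assoc, Matrix.mul_assoc]

lemma frobSq_mul_left_of_transpose_mul_self [DecidableEq ι] {U : Matrix μ ι ℝ}
    (hU : Uᵀ * U = 1) (A : Matrix ι κ ℝ) : frobSq (U * A) = frobSq A := by
  rw [frobSq_eq_trace, frobSq_eq_trace, transpose_mul, Matrix.mul_assoc,
    ← Matrix.mul_assoc Uᵀ, hU, Matrix.one_mul]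

lemma frobSq_mul_right_of_mul_transpose_self [DecidableEq κ] {Q : Matrix κ μ ℝ}
    (hQ : Q * Qᵀ = 1) (A : Matrix ι κ ℝ) : frobSq (A * Q) = frobSq A := by
  rw [frobSq_mul_eq_trace, hQ, Matrix.mul_one, frobSq_eq_trace]

/-- Pythagoras for the orthogonal projection `P = W Wᵀ`, applied to the rows of `A`. -/
lemma frobSq_mul_le_of_transpose_mul_self [DecidableEq μ] {W : Matrix κ μ ℝ}
    (hW : Wᵀ * W = 1) (A : Matrix ι κ ℝ) : frobSq (A * W) ≤ frobSq A := by
  classical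
  set P := W * Wᵀ
  have hPP : P * P = P := by
    rw [Matrix.mul_assoc, ← Matrix.mul_assoc Wᵀ, hW, Matrix.one_mul]
  have hPt : Pᵀ = P := by rw [transpose_mul, transpose_transpose]
  have hQ : (1 - P) * (1 - P)ᵀ = 1 - P := by
    rw [transpose_sub, transpose_one, hPt, Matrix.sub_mul, Matrix.mul_sub, Matrix.mul_sub, hPP]
    simp
  have hsplit : frobSq (A * (1 - P)) = frobSq A - frobSq (A * W) := by
    rw [frobSq_mul_eq_trace, hQ, Matrix.mul_sub, Matrix.mul_one, trace_sub, frobSq_eq_trace,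
      frobSq_mul_eq_trace]
  linarith [frobSq_nonneg (A * (1 - P))]

lemma sum_sq_row_le_one_of_transpose_mul_self [DecidableEq μ]
    {W : Matrix κ μ ℝ} (hW : Wᵀ * W = 1) (j : κ) : ∑ k, W j k ^ 2 ≤ 1 := by
  classical
  -- row `j` of `W` is `eⱼᵀ W`
  simpa [frobSq, Matrix.mul_apply, Pi.single_apply] using
    frobSq_mul_le_of_transpose_mul_self hW (replicateRow Unit (Pi.single j (1 : ℝ)))

lemma frobSq_eq_card_of_transpose_mul_self [DecidableEq μ] {W : Matrix κ μ ℝ}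
    (hW : Wᵀ * W = 1) : frobSq W = Fintype.card μ := by
  rw [frobSq_eq_trace, hW, trace_one]

end FrobeniusSq

lemma exists_orthonormal_cols_mul_eq_zero {ι κ : Type*} [Fintype ι] [Fintype κ]
    (Y : Matrix ι κ ℝ) {k : ℕ} (hk : k + Y.rank ≤ Fintype.card κ) :
    ∃ W : Matrix κ (Fin k) ℝ, Wᵀ * W = 1 ∧ Y * W = 0 := by
  set g : EuclideanSpace ℝ κ →ₗ[ℝ] (ι → ℝ) :=
    Y.mulVecLin ∘ₗ (WithLp.linearEquiv 2 ℝ (κ → ℝ)).toLinearMap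
  have hrange : Module.finrank ℝ (LinearMap.range g) = Y.rank := by
    rw [LinearMap.range_comp_of_range_eq_top _ (LinearEquiv.range _)]; rfl
  have hdim := LinearMap.finrank_range_add_finrank_ker g
  rw [hrange, finrank_euclideanSpace] at hdim
  have hle : k ≤ Module.finrank ℝ (LinearMap.ker g) := by omega
  set b := stdOrthonormalBasis ℝ (LinearMap.ker g)
  set w : Fin k → LinearMap.ker g := fun i => b (Fin.castLE hle i)
  refine ⟨Matrix.of fun j i => (w i : EuclideanSpace ℝ κ) j, ?_, ?_⟩
  · ext i i'
    have horth := b.inner_eq_ite (Fin.castLE hle i) (Fin.castLE hle i')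
    rw [Submodule.coe_inner, PiLp.inner_apply] at horth
    simp only [Fin.castLE_inj, RCLike.inner_apply, conj_trivial] at horth
    simp only [Matrix.mul_apply, Matrix.one_apply, transpose_apply, of_apply]
    rw [← horth]
    exact Finset.sum_congr rfl fun j _ => mul_comm _ _
  · ext j i
    exact congrFun (w i).2 j

def rectDiagonal (m n : ℕ) (d : ℕ → ℝ) : Matrix (Fin m) (Fin n) ℝ :=
  Matrix.of fun i j => if (i : ℕ) = j then d i else 0

section RectDiagonal

variable {m n : ℕ}

lemma rectDiagonal_sub (d e : ℕ → ℝ) :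
    rectDiagonal m n d - rectDiagonal m n e = rectDiagonal m n (d - e) := by
  ext i j
  simp only [rectDiagonal, Matrix.sub_apply, of_apply, Pi.sub_apply]
  split_ifs <;> simp

lemma rectDiagonal_transpose_mul_self (d : ℕ → ℝ) :
    (rectDiagonal m n d)ᵀ * rectDiagonal m n d =
      diagonal fun j : Fin n => if (j : ℕ) < m then d j ^ 2 else 0 := by
  ext j j'
  have hterm : ∀ i : Fin m, (if (i : ℕ) = j then d i else 0) * (if (i : ℕ) = j' then d i else 0)
      = if (i : ℕ) = j then (if j = j' then d j ^ 2 else 0) else 0 := by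
    intro i
    by_cases hij : (i : ℕ) = j
    · simp [hij, Fin.val_inj, sq]
    · simp [hij]
  simp only [rectDiagonal, mul_apply, transpose_apply, of_apply, diagonal_apply, hterm]
  rw [Fin.sum_ite_val_eq]
  split_ifs <;> simp

lemma frobSq_rectDiagonal (d : ℕ → ℝ) :
    frobSq (rectDiagonal m n d) = ∑ j : Fin n, if (j : ℕ) < m then d j ^ 2 else 0 := by
  rw [frobSq_eq_trace, rectDiagonal_transpose_mul_self, trace_diagonal]

lemma frobSq_rectDiagonal_mul {κ : Type*} [Fintype κ] (d : ℕ → ℝ) (B : Matrix (Fin n) κ ℝ) :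
    frobSq (rectDiagonal m n d * B) =
      ∑ j : Fin n, (if (j : ℕ) < m then d j ^ 2 else 0) * ∑ k, B j k ^ 2 := by
  rw [frobSq_mul_eq_trace, rectDiagonal_transpose_mul_self, trace]
  simp only [diag_apply, diagonal_mul]
  simp only [mul_apply, transpose_apply, sq]

lemma rank_rectDiagonal_le {d : ℕ → ℝ} {r : ℕ} (hd : ∀ i, r ≤ i → d i = 0) :
    (rectDiagonal m n d).rank ≤ r := by
  classical
  have hproj : rectDiagonal m n d =
      diagonal (fun i : Fin m => if (i : ℕ) < r then (1 : ℝ) else 0) * rectDiagonal m n d := by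
    ext i j
    by_cases hi : (i : ℕ) < r
    · simp [diagonal_mul, hi]
    · simp [diagonal_mul, rectDiagonal, hi, hd i (not_lt.mp hi)]
  rw [hproj]
  refine (rank_mul_le_left _ _).trans ?_
  rw [rank_diagonal, Fintype.card_subtype]
  simp [Fin.card_filter_val_lt]

end RectDiagonal

section EckartYoung

variable {m n r : ℕ} {U : Matrix (Fin m) (Fin m) ℝ} {V : Matrix (Fin n) (Fin n) ℝ} {σ : ℕ → ℝ}

lemma frobSq_sub_truncation (hU : Uᵀ * U = 1) (hV : Vᵀ * V = 1) :
    frobSq (U * rectDiagonal m n σ * Vᵀ -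
        U * rectDiagonal m n (fun i => if i < r then σ i else 0) * Vᵀ) =
      ∑ j : Fin n with r ≤ j.val, if (j : ℕ) < m then σ j ^ 2 else 0 := by
  have hVt : Vᵀ * Vᵀᵀ = 1 := by rwa [transpose_transpose]
  rw [← Matrix.sub_mul, ← Matrix.mul_sub, frobSq_mul_right_of_mul_transpose_self hVt,
    frobSq_mul_left_of_transpose_mul_self hU, rectDiagonal_sub, frobSq_rectDiagonal, sum_filter]
  refine sum_congr rfl fun j _ => ?_
  by_cases hj : (j : ℕ) < r <;> simp [hj]

lemma sum_tail_sq_le_frobSq_sub (hrm : r ≤ m) (hrn : r ≤ n) (hU : Uᵀ * U = 1)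
    (hV : V * Vᵀ = 1) (hσ0 : ∀ i, 0 ≤ σ i) (hσ : Antitone σ)
    {Y : Matrix (Fin m) (Fin n) ℝ} (hY : Y.rank ≤ r) :
    ∑ j : Fin n with r ≤ j.val, (if (j : ℕ) < m then σ j ^ 2 else 0)
      ≤ frobSq (U * rectDiagonal m n σ * Vᵀ - Y) := by
  obtain ⟨W, hW, hYW⟩ := exists_orthonormal_cols_mul_eq_zero Y (k := n - r)
    (by rw [Fintype.card_fin]; omega)
  set W' := Vᵀ * W
  have hW' : W'ᵀ * W' = 1 := by
    rw [transpose_mul, transpose_transpose, Matrix.mul_assoc, ← Matrix.mul_assoc V, hV,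
      Matrix.one_mul, hW]
  calc ∑ j : Fin n with r ≤ j.val, (if (j : ℕ) < m then σ j ^ 2 else 0)
      ≤ ∑ j : Fin n, (if (j : ℕ) < m then σ j ^ 2 else 0) * ∑ k, W' j k ^ 2 := by
        refine sum_le_sum_mul_of_sum_eq_card _ _ _ (σ r ^ 2) ?_ ?_
          (fun j => by positivity) (sum_sq_row_le_one_of_transpose_mul_self hW') ?_
        · intro j hj
          rw [mem_filter] at hj
          split_ifs
          · exact pow_le_pow_left₀ (hσ0 _) (hσ hj.2) 2
          · positivity
        · intro j hj
          rw [mem_filter, not_and, not_le] at hj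
          have hjr := hj (mem_univ j)
          rw [if_pos (by omega)]
          exact pow_le_pow_left₀ (hσ0 _) (hσ hjr.le) 2
        · rw [← frobSq, frobSq_eq_card_of_transpose_mul_self hW', Fin.card_filter_le_val,
            Fintype.card_fin]
    _ = frobSq (U * rectDiagonal m n σ * Vᵀ * W) := by
        rw [Matrix.mul_assoc, Matrix.mul_assoc, frobSq_mul_left_of_transpose_mul_self hU,
          frobSq_rectDiagonal_mul]
    _ = frobSq ((U * rectDiagonal m n σ * Vᵀ - Y) * W) := by rw [Matrix.sub_mul, hYW, sub_zero]
    _ ≤ frobSq (U * rectDiagonal m n σ * Vᵀ - Y) := frobSq_mul_le_of_transpose_mul_self hW _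

end EckartYoung

theorem stmt5_general (m n r : ℕ) (hr : r ≤ min m n)
    (U : Matrix (Fin m) (Fin m) ℝ) (V : Matrix (Fin n) (Fin n) ℝ)
    (hU' : U.transpose * U = 1)
    (hV : V * V.transpose = 1) (hV' : V.transpose * V = 1)
    (σ : ℕ → ℝ) (hσnonneg : ∀ i, 0 ≤ σ i)
    (hσmono : ∀ i j, i ≤ j → σ j ≤ σ i)
    (Smat Sr : Matrix (Fin m) (Fin n) ℝ)
    (hS : ∀ i j, Smat i j = if (i : ℕ) = (j : ℕ) then σ i else 0)
    (hSr : ∀ i j, Sr i j = if (i : ℕ) = (j : ℕ) ∧ (i : ℕ) < r then σ i else 0)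
    (Z : Matrix (Fin m) (Fin n) ℝ) (hZ : Z = U * Smat * V.transpose) :
    (U * Sr * V.transpose).rank ≤ r ∧
      ∀ Y : Matrix (Fin m) (Fin n) ℝ, Y.rank ≤ r →
        frobNorm (Z - U * Sr * V.transpose) ≤ frobNorm (Z - Y) := by
  have hSmat : Smat = rectDiagonal m n σ := Matrix.ext hS
  have hStrunc : Sr = rectDiagonal m n (fun i => if i < r then σ i else 0) := by
    ext i j
    rw [hSr, ite_and]
    split_ifs <;> simp_all [rectDiagonal]
  subst hZ hSmat hStrunc
  refine ⟨(rank_mul_le_left _ _).trans ((rank_mul_le_right _ _).trans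
    (rank_rectDiagonal_le fun i hi => if_neg (not_lt.mpr hi))), fun Y hY => ?_⟩
  refine Real.sqrt_le_sqrt ?_
  change frobSq _ ≤ frobSq _
  rw [frobSq_sub_truncation hU' hV']
  exact sum_tail_sq_le_frobSq_sub (hr.trans (min_le_left _ _)) (hr.trans (min_le_right _ _))
    hU' hV hσnonneg hσmono hY

/-- Eckart–Young in Frobenius norm: if Z = UΣVᵀ is an SVD with
singular values σ in non-increasing order, then the truncated SVD UΣ_rVᵀ,
keeping only the r largest singular values, has rank ≤ r and minimizes
‖Z − Y‖_F over all Y with rank(Y) ≤ r. -/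
theorem stmt5 (m n r : ℕ) (hr : r ≤ min m n)
    (U : Matrix (Fin m) (Fin m) ℝ) (V : Matrix (Fin n) (Fin n) ℝ)
    (hU : U * U.transpose = 1) (hU' : U.transpose * U = 1)
    (hV : V * V.transpose = 1) (hV' : V.transpose * V = 1)
    (σ : ℕ → ℝ) (hσnonneg : ∀ i, 0 ≤ σ i)
    (hσmono : ∀ i j, i ≤ j → σ j ≤ σ i)
    (Smat Sr : Matrix (Fin m) (Fin n) ℝ)
    (hS : ∀ i j, Smat i j = if (i : ℕ) = (j : ℕ) then σ i else 0)
    (hSr : ∀ i j, Sr i j = if (i : ℕ) = (j : ℕ) ∧ (i : ℕ) < r then σ i else 0)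
    (Z : Matrix (Fin m) (Fin n) ℝ) (hZ : Z = U * Smat * V.transpose) :
    (U * Sr * V.transpose).rank ≤ r ∧
      ∀ Y : Matrix (Fin m) (Fin n) ℝ, Y.rank ≤ r →
        frobNorm (Z - U * Sr * V.transpose) ≤ frobNorm (Z - Y) :=
  stmt5_general m n r hr U V hU' hV hV' σ hσnonneg hσmono Smat Sr hS hSr Z hZ
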